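/- In a J-category in which all objects are cofibrant models, if p : E → B and p' : E' → B' are weakly equivalent morphisms, then Wsecat(p) = Wsecat(p'). -/

import Mathlib

open CategoryTheory CategoryTheory.Limits ZeroObject

universe v u v' u'

variable (C : Type u) [Category.{v} C] [HasZeroObject C] [HasZeroMorphisms C]

/-- A category satisfying axioms (J1)-(J4) of Doeraene's J-categories:
a pointed category with fibrations, cofibrations and weak equivalences. -/
structure PreJCat where
  fib : MorphismProperty C
  cofib : MorphismProperty C
  weq : MorphismProperty C
  /-- (J1) isomorphisms are trivial cofibrations -/
  iso_triv_cofib : ∀ {X Y : C} (f : X ⟶ Y), IsIso f → cofib f ∧ weq f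
  /-- (J1) isomorphisms are trivial fibrations -/
  iso_triv_fib : ∀ {X Y : C} (f : X ⟶ Y), IsIso f → fib f ∧ weq f
  fib_comp : ∀ {X Y Z : C} {f : X ⟶ Y} {g : Y ⟶ Z}, fib f → fib g → fib (f ≫ g)
  cofib_comp : ∀ {X Y Z : C} {f : X ⟶ Y} {g : Y ⟶ Z}, cofib f → cofib g → cofib (f ≫ g)
  /-- (J1) two-out-of-three for weak equivalences -/
  weq_comp : ∀ {X Y Z : C} {f : X ⟶ Y} {g : Y ⟶ Z}, weq f → weq g → weq (f ≫ g)
  weq_of_comp_left : ∀ {X Y Z : C} {f : X ⟶ Y} {g : Y ⟶ Z}, weq g → weq (f ≫ g) → weq f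
  weq_of_comp_right : ∀ {X Y Z : C} {f : X ⟶ Y} {g : Y ⟶ Z}, weq f → weq (f ≫ g) → weq g
  /-- (J2) pullbacks of fibrations exist, and the base extension is a fibration -/
  pb_exists : ∀ {E B B' : C} (p : E ⟶ B) (f : B' ⟶ B), fib p →
    ∃ (P : C) (fb : P ⟶ E) (pb : P ⟶ B'), IsPullback fb pb p f ∧ fib pb
  /-- (J2) base extensions of weak equivalences along fibrations are weak equivalences -/
  pb_weq : ∀ {E B B' P : C} {p : E ⟶ B} {f : B' ⟶ B} {fb : P ⟶ E} {pb : P ⟶ B'},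
    fib p → IsPullback fb pb p f → (weq f → weq fb) ∧ (weq p → weq pb)
  /-- (J2) dual: pushouts of cofibrations exist -/
  po_exists : ∀ {A X Y : C} (i : A ⟶ X) (g : A ⟶ Y), cofib i →
    ∃ (Q : C) (inl : X ⟶ Q) (inr : Y ⟶ Q), IsPushout i g inl inr ∧ cofib inr
  po_weq : ∀ {A X Y Q : C} {i : A ⟶ X} {g : A ⟶ Y} {inl : X ⟶ Q} {inr : Y ⟶ Q},
    cofib i → IsPushout i g inl inr → (weq g → weq inl) ∧ (weq i → weq inr)
  /-- (J3) F-factorizations exist -/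
  F_fac : ∀ {X Y : C} (f : X ⟶ Y), ∃ (Z : C) (τ : X ⟶ Z) (q : Z ⟶ Y),
    weq τ ∧ fib q ∧ τ ≫ q = f
  /-- (J3) C-factorizations exist -/
  C_fac : ∀ {X Y : C} (f : X ⟶ Y), ∃ (Z : C) (i : X ⟶ Z) (σ : Z ⟶ Y),
    cofib i ∧ weq σ ∧ i ≫ σ = f
  /-- (J4) cofibrant replacements exist -/
  cof_replace : ∀ X : C, ∃ (Xb : C) (q : Xb ⟶ X), fib q ∧ weq q ∧
    (∀ {E : C} (p : E ⟶ Xb), fib p → weq p → ∃ s : Xb ⟶ E, s ≫ p = 𝟙 Xb)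

variable {C}

namespace PreJCat

/-- An object is a cofibrant model if every trivial fibration onto it admits a section. -/
def CofModel (P : PreJCat C) (X : C) : Prop :=
  ∀ {E : C} (p : E ⟶ X), P.fib p → P.weq p → ∃ s : X ⟶ E, s ≫ p = 𝟙 X

/-- An object is e-fibrant if the morphism to the zero object is a fibration. -/
def EFibrant (P : PreJCat C) (X : C) : Prop := P.fib (0 : X ⟶ 0)

/-- `f` admits a weak lifting along `g` (all objects being cofibrant models). -/
def WeakLifting (P : PreJCat C) {A B Cc : C} (f : A ⟶ B) (g : Cc ⟶ B) : Prop :=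
  ∃ (E : C) (τ : Cc ⟶ E) (q : E ⟶ B), P.weq τ ∧ P.fib q ∧ τ ≫ q = g ∧
    ∃ s : A ⟶ E, s ≫ q = f

/-- `g` admits a weak section. -/
def HasWeakSection (P : PreJCat C) {E B : C} (g : E ⟶ B) : Prop :=
  P.WeakLifting (𝟙 B) g

/-- `j : J ⟶ B` is a join morphism of `f : A ⟶ B` and `g : Cc ⟶ B`: built from an
F-factorization of `g`, a pullback, a C-factorization and a pushout. -/
def IsJoin (P : PreJCat C) {A Cc B J : C} (f : A ⟶ B) (g : Cc ⟶ B) (j : J ⟶ B) : Prop :=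
  ∃ (E : C) (τ : Cc ⟶ E) (q : E ⟶ B), P.weq τ ∧ P.fib q ∧ τ ≫ q = g ∧
  ∃ (E' Z : C) (fbar : E' ⟶ E) (pbar : E' ⟶ A) (i : E' ⟶ Z) (σ : Z ⟶ E)
    (a : A ⟶ J) (bz : Z ⟶ J),
    IsPullback fbar pbar q f ∧ P.cofib i ∧ P.weq σ ∧ i ≫ σ = fbar ∧
    IsPushout pbar i a bz ∧ a ≫ j = f ∧ bz ≫ j = σ ≫ q

/-- `IsIterJoin P p n h` : `h` is an `n`-th iterated join morphism `*ⁿ_B E ⟶ B` of `p`. -/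
inductive IsIterJoin (P : PreJCat C) {E B : C} (p : E ⟶ B) : ℕ → ∀ {X : C}, (X ⟶ B) → Prop
  | zero : IsIterJoin P p 0 p
  | succ {n : ℕ} {X Y : C} {h : X ⟶ B} {h' : Y ⟶ B} :
      IsIterJoin P p n h → P.IsJoin h p h' → IsIterJoin P p (n + 1) h'

/-- The Ganea-type sectional category of a morphism. -/
noncomputable def Gsecat (P : PreJCat C) {E B : C} (p : E ⟶ B) : ℕ∞ :=
  sInf {n : ℕ∞ | ∃ m : ℕ, n = (m : ℕ∞) ∧
    ∃ (X : C) (h : X ⟶ B), P.IsIterJoin p m h ∧ P.HasWeakSection h}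

end PreJCat

/-- `p1, p2` exhibit `Pd` as a binary product of `X` and `Y`. -/
def IsBinProd {X Y Pd : C} (p1 : Pd ⟶ X) (p2 : Pd ⟶ Y) : Prop :=
  Nonempty (IsLimit (BinaryFan.mk p1 p2))

namespace PreJCat

/-- `IsFatWedge P p n j Δ` : `j : Tⁿ(p) ⟶ B^{n+1}` is an `n`-th fat wedge morphism of `p`
together with the diagonal `Δ : B ⟶ B^{n+1}`. -/
inductive IsFatWedge (P : PreJCat C) {E B : C} (p : E ⟶ B) :
    ℕ → ∀ {T Pw : C}, (T ⟶ Pw) → (B ⟶ Pw) → Prop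
  | zero : IsFatWedge P p 0 p (𝟙 B)
  | succ {n : ℕ} {T Pn : C} {j : T ⟶ Pn} {Δ : B ⟶ Pn}
      (hprev : IsFatWedge P p n j Δ)
      {Pn1 : C} {pr1 : Pn1 ⟶ Pn} {pr2 : Pn1 ⟶ B} (hP : IsBinProd pr1 pr2)
      {TB : C} {q1 : TB ⟶ T} {q2 : TB ⟶ B} (hTB : IsBinProd q1 q2)
      {PE : C} {r1 : PE ⟶ Pn} {r2 : PE ⟶ E} (hPE : IsBinProd r1 r2)
      {jB : TB ⟶ Pn1} (hjB : jB ≫ pr1 = q1 ≫ j ∧ jB ≫ pr2 = q2)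
      {pP : PE ⟶ Pn1} (hpP : pP ≫ pr1 = r1 ∧ pP ≫ pr2 = r2 ≫ p)
      {Tn1 : C} {j' : Tn1 ⟶ Pn1} (hjoin : P.IsJoin jB pP j')
      {Δ' : B ⟶ Pn1} (hΔ : Δ' ≫ pr1 = Δ ∧ Δ' ≫ pr2 = 𝟙 B) :
      IsFatWedge P p (n + 1) j' Δ'

/-- The Whitehead-type sectional category of a morphism with e-fibrant codomain. -/
noncomputable def WsecatE (P : PreJCat C) {E B : C} (p : E ⟶ B) : ℕ∞ :=
  sInf {n : ℕ∞ | ∃ m : ℕ, n = (m : ℕ∞) ∧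
    ∃ (T Pw : C) (j : T ⟶ Pw) (Δ : B ⟶ Pw), P.IsFatWedge p m j Δ ∧ P.WeakLifting Δ j}

/-- The Whitehead-type sectional category of an arbitrary morphism, via e-fibrant
replacements of the codomain. -/
noncomputable def Wsecat (P : PreJCat C) {E B : C} (p : E ⟶ B) : ℕ∞ :=
  ⨅ (F : C) (τ : B ⟶ F) (_ : P.weq τ ∧ P.EFibrant F), P.WsecatE (p ≫ τ)

/-- A commutative square is a homotopy pullback. -/
def IsHPB (P : PreJCat C) {D A Cc B : C} (f' : D ⟶ Cc) (g' : D ⟶ A)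
    (g : Cc ⟶ B) (f : A ⟶ B) : Prop :=
  f' ≫ g = g' ≫ f ∧ ∃ (E : C) (τ : Cc ⟶ E) (q : E ⟶ B), P.weq τ ∧ P.fib q ∧ τ ≫ q = g ∧
    ∃ (Pt : C) (pr1 : Pt ⟶ E) (pr2 : Pt ⟶ A), IsPullback pr1 pr2 q f ∧
      ∃ w : D ⟶ Pt, P.weq w ∧ w ≫ pr1 = f' ≫ τ ∧ w ≫ pr2 = g'

/-- A commutative square is a homotopy pushout. -/
def IsHPO (P : PreJCat C) {A B Cc D : C} (f : A ⟶ B) (g : A ⟶ Cc)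
    (i' : B ⟶ D) (j' : Cc ⟶ D) : Prop :=
  f ≫ i' = g ≫ j' ∧ ∃ (Z : C) (i : A ⟶ Z) (σ : Z ⟶ B), P.cofib i ∧ P.weq σ ∧ i ≫ σ = f ∧
    ∃ (Q : C) (inl : Z ⟶ Q) (inr : Cc ⟶ Q), IsPushout i g inl inr ∧
      ∃ w : Q ⟶ D, P.weq w ∧ inl ≫ w = σ ≫ i' ∧ inr ≫ w = j'

/-- `A-A'-B'-B` is a weak pullback over `b : B ⟶ B'` (all objects cofibrant models). -/
def IsWeakPullback (P : PreJCat C) {A B A' B' : C}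
    (f : A ⟶ B) (f' : A' ⟶ B') (b : B ⟶ B') : Prop :=
  ∃ (X : C) (τ : A' ⟶ X) (q : X ⟶ B'), P.weq τ ∧ P.fib q ∧ τ ≫ q = f' ∧
    ∃ x : A ⟶ X, P.IsHPB x f q b

/-- `g : G ⟶ B` is an `n`-th Ganea map of `B`: the `n`-th iterated join of `0 ⟶ B`. -/
def IsGaneaMap (P : PreJCat C) (B : C) (n : ℕ) {G : C} (g : G ⟶ B) : Prop :=
  P.IsIterJoin (0 : (0 : C) ⟶ B) n g

/-- The Lusternik-Schnirelmann category of an object. -/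
noncomputable def catObj (P : PreJCat C) (B : C) : ℕ∞ :=
  sInf {n : ℕ∞ | ∃ m : ℕ, n = (m : ℕ∞) ∧
    ∃ (G : C) (g : G ⟶ B), P.IsGaneaMap B m g ∧ P.HasWeakSection g}

/-- The Lusternik-Schnirelmann category of a morphism `b : B ⟶ B'`:
least `n` such that `b` admits a weak lifting along the `n`-th Ganea map of `B'`. -/
noncomputable def catMor (P : PreJCat C) {B B' : C} (b : B ⟶ B') : ℕ∞ :=
  sInf {n : ℕ∞ | ∃ m : ℕ, n = (m : ℕ∞) ∧
    ∃ (G : C) (g : G ⟶ B'), P.IsGaneaMap B' m g ∧ P.WeakLifting b g}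

/-- One step of a zigzag: a weak equivalence of morphisms in the arrow category. -/
def MorWeqStep (P : PreJCat C) (u v : Arrow C) : Prop :=
  ∃ h : u ⟶ v, P.weq h.left ∧ P.weq h.right

/-- Two morphisms are weakly equivalent: joined by a finite zigzag of weak
equivalences of morphisms. -/
def WeaklyEquivMor (P : PreJCat C) (u v : Arrow C) : Prop :=
  Relation.EqvGen P.MorWeqStep u v

def ObjWeqStep (P : PreJCat C) (X Y : C) : Prop := ∃ f : X ⟶ Y, P.weq f

/-- Two objects are weakly equivalent: joined by a finite zigzag of weak equivalences. -/
def WeaklyEquivObj (P : PreJCat C) (X Y : C) : Prop :=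
  Relation.EqvGen P.ObjWeqStep X Y

/-- The abstract topological complexity of an e-fibrant object:
the sectional category of the diagonal `B ⟶ B × B`. -/
noncomputable def TCE (P : PreJCat C) (B : C) : ℕ∞ :=
  ⨅ (Pd : C) (p1 : Pd ⟶ B) (p2 : Pd ⟶ B) (_ : IsBinProd p1 p2)
    (Δ : B ⟶ Pd) (_ : Δ ≫ p1 = 𝟙 B ∧ Δ ≫ p2 = 𝟙 B), P.Gsecat Δ

/-- The abstract topological complexity of an arbitrary object, via e-fibrant
replacements. -/
noncomputable def TC (P : PreJCat C) (B : C) : ℕ∞ :=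
  ⨅ (F : C) (τ : B ⟶ F) (_ : P.weq τ ∧ P.EFibrant F), P.TCE F

end PreJCat

variable (C)

/-- A J-category: (J1)-(J4) together with the cube axiom (J5). -/
structure JCat extends PreJCat C where
  /-- (J5) the cube axiom: in a commutative cube whose bottom face is a homotopy
  pushout and whose vertical faces are homotopy pullbacks, the top face is a
  homotopy pushout. -/
  cube : ∀ {X00 X01 X10 X11 Y00 Y01 Y10 Y11 : C}
    {tf : X00 ⟶ X01} {tg : X00 ⟶ X10} {ti : X01 ⟶ X11} {tj : X10 ⟶ X11}
    {bf : Y00 ⟶ Y01} {bg : Y00 ⟶ Y10} {bi : Y01 ⟶ Y11} {bj : Y10 ⟶ Y11}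
    {v00 : X00 ⟶ Y00} {v01 : X01 ⟶ Y01} {v10 : X10 ⟶ Y10} {v11 : X11 ⟶ Y11},
    tf ≫ ti = tg ≫ tj →
    toPreJCat.IsHPO bf bg bi bj →
    toPreJCat.IsHPB tf v00 v01 bf →
    toPreJCat.IsHPB tg v00 v10 bg →
    toPreJCat.IsHPB ti v01 v11 bi →
    toPreJCat.IsHPB tj v10 v11 bj →
    toPreJCat.IsHPO tf tg ti tj

variable {C}

/-- A modelization functor: preserves weak equivalences, homotopy pullbacks and
homotopy pushouts. -/
structure ModelizationFunctor {D : Type u'} [Category.{v'} D] [HasZeroObject D]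
    [HasZeroMorphisms D] (P : PreJCat C) (Q : PreJCat D) where
  F : C ⥤ D
  map_weq : ∀ {X Y : C} (f : X ⟶ Y), P.weq f → Q.weq (F.map f)
  map_hpb : ∀ {Dd A Cc B : C} {f' : Dd ⟶ Cc} {g' : Dd ⟶ A} {g : Cc ⟶ B} {f : A ⟶ B},
    P.IsHPB f' g' g f → Q.IsHPB (F.map f') (F.map g') (F.map g) (F.map f)
  map_hpo : ∀ {A B Cc Dd : C} {f : A ⟶ B} {g : A ⟶ Cc} {i' : B ⟶ Dd} {j' : Cc ⟶ Dd},
    P.IsHPO f g i' j' → Q.IsHPO (F.map f) (F.map g) (F.map i') (F.map j')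

/-!
Weak liftings of `Δ` along `j` are invariant under weak equivalences of the pair `(Δ, j)`: an
F-factorization pulls back along a weak equivalence, and, all objects being cofibrant models,
a lifting through one F-factorization yields one through any other. It therefore suffices to
relate the fat-wedge maps `jₙ` of weakly equivalent morphisms by zigzags of weak equivalences
compatible with the diagonals. By induction on `n` this reduces to the homotopy invariance of
products, which are pullbacks over the zero object, and of joins: joins of one cospan built
from different factorizations agree up to weak equivalence, and the cube axiom shows that a
weak equivalence of cospans induces one of joins. Finally `Wsecat p = WsecatE (p ≫ τ)` for
every e-fibrant replacement `τ`, any two replacements being dominated by a third.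
-/

set_option linter.unusedSectionVars false

namespace IsBinProd

variable {X Y Pd W : C} {p1 : Pd ⟶ X} {p2 : Pd ⟶ Y}

lemma isPullback (h : IsBinProd p1 p2) : IsPullback p1 p2 (0 : X ⟶ 0) (0 : Y ⟶ 0) := by
  convert IsPullback.of_is_product' h.some HasZeroObject.zeroIsTerminal <;>
    exact (isZero_zero C).eq_of_tgt _ _

lemma of_isPullback (h : IsPullback p1 p2 (0 : X ⟶ 0) (0 : Y ⟶ 0)) : IsBinProd p1 p2 :=
  ⟨isProductOfIsTerminalIsPullback _ _ _ _ HasZeroObject.zeroIsTerminal h.isLimit⟩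

lemma swap (h : IsBinProd p1 p2) : IsBinProd p2 p1 :=
  of_isPullback h.isPullback.flip

noncomputable def lift (h : IsBinProd p1 p2) (f : W ⟶ X) (g : W ⟶ Y) : W ⟶ Pd :=
  h.isPullback.lift f g (by simp)

@[simp]
lemma lift_fst (h : IsBinProd p1 p2) (f : W ⟶ X) (g : W ⟶ Y) : h.lift f g ≫ p1 = f :=
  h.isPullback.lift_fst _ _ _

@[simp]
lemma lift_snd (h : IsBinProd p1 p2) (f : W ⟶ X) (g : W ⟶ Y) : h.lift f g ≫ p2 = g :=
  h.isPullback.lift_snd _ _ _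

@[simp]
lemma lift_fst_assoc (h : IsBinProd p1 p2) (f : W ⟶ X) (g : W ⟶ Y) {Z : C} (k : X ⟶ Z) :
    h.lift f g ≫ p1 ≫ k = f ≫ k := by
  rw [← Category.assoc, lift_fst]

@[simp]
lemma lift_snd_assoc (h : IsBinProd p1 p2) (f : W ⟶ X) (g : W ⟶ Y) {Z : C} (k : Y ⟶ Z) :
    h.lift f g ≫ p2 ≫ k = g ≫ k := by
  rw [← Category.assoc, lift_snd]

lemma hom_ext (h : IsBinProd p1 p2) {f g : W ⟶ Pd} (h1 : f ≫ p1 = g ≫ p1)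
    (h2 : f ≫ p2 = g ≫ p2) : f = g :=
  h.isPullback.hom_ext h1 h2

end IsBinProd

namespace PreJCat

variable {P : PreJCat C}

lemma weq_of_isIso {X Y : C} (f : X ⟶ Y) [IsIso f] : P.weq f := (P.iso_triv_fib f ‹_›).2

lemma fib_of_isIso {X Y : C} (f : X ⟶ Y) [IsIso f] : P.fib f := (P.iso_triv_fib f ‹_›).1

lemma cofib_of_isIso {X Y : C} (f : X ⟶ Y) [IsIso f] : P.cofib f := (P.iso_triv_cofib f ‹_›).1

lemma fib_of_isPullback {E B B' Q : C} {p : E ⟶ B} {f : B' ⟶ B} {fb : Q ⟶ E} {pb : Q ⟶ B'}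
    (hp : P.fib p) (h : IsPullback fb pb p f) : P.fib pb := by
  obtain ⟨R, fb', pb', h', hpb'⟩ := P.pb_exists p f hp
  rw [← h.isoIsPullback_hom_snd _ _ h']
  exact P.fib_comp (fib_of_isIso _) hpb'

lemma cofib_of_isPushout {A X Y Q : C} {i : A ⟶ X} {g : A ⟶ Y} {inl : X ⟶ Q} {inr : Y ⟶ Q}
    (hi : P.cofib i) (h : IsPushout i g inl inr) : P.cofib inr := by
  obtain ⟨R, inl', inr', h', hinr'⟩ := P.po_exists i g hi
  rw [← h'.inr_isoIsPushout_hom _ _ h]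
  exact P.cofib_comp hinr' (cofib_of_isIso _)

lemma eFibrant_zero : P.EFibrant 0 := by
  simpa [EFibrant] using fib_of_isIso (P := P) (𝟙 (0 : C))

lemma EFibrant.of_fib {X Y : C} {f : X ⟶ Y} (hY : P.EFibrant Y) (hf : P.fib f) :
    P.EFibrant X := by
  simpa [EFibrant] using P.fib_comp hf hY

lemma _root_.IsBinProd.fib_fst {X Y Pd : C} {p1 : Pd ⟶ X} {p2 : Pd ⟶ Y} (h : IsBinProd p1 p2)
    (hY : P.EFibrant Y) : P.fib p1 :=
  fib_of_isPullback hY h.isPullback.flip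

lemma _root_.IsBinProd.eFibrant {X Y Pd : C} {p1 : Pd ⟶ X} {p2 : Pd ⟶ Y} (h : IsBinProd p1 p2)
    (hX : P.EFibrant X) (hY : P.EFibrant Y) : P.EFibrant Pd :=
  hX.of_fib (h.fib_fst hY)

lemma exists_isBinProd {X : C} (hX : P.EFibrant X) (Y : C) :
    ∃ (Pd : C) (p1 : Pd ⟶ X) (p2 : Pd ⟶ Y), IsBinProd p1 p2 := by
  obtain ⟨Pd, p1, p2, h, -⟩ := P.pb_exists (0 : X ⟶ 0) (0 : Y ⟶ 0) hX
  exact ⟨Pd, p1, p2, .of_isPullback h⟩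

lemma exists_eFibrant_replacement (B : C) : ∃ (F : C) (τ : B ⟶ F), P.weq τ ∧ P.EFibrant F := by
  obtain ⟨F, τ, q, hτ, hq, -⟩ := P.F_fac (0 : B ⟶ 0)
  exact ⟨F, τ, hτ, eFibrant_zero.of_fib hq⟩


section ProdMap

variable {X Y X' Y' Pd Pd' : C} {p1 : Pd ⟶ X} {p2 : Pd ⟶ Y} {p1' : Pd' ⟶ X'} {p2' : Pd' ⟶ Y'}
  {f : X ⟶ X'} {g : Y ⟶ Y'} {m : Pd ⟶ Pd'}

/-- `m = f × g` factors as `(f × 𝟙) ≫ (𝟙 × g)`. -/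
lemma exists_prodMap_factorization (h : IsBinProd p1 p2) (h' : IsBinProd p1' p2')
    (hX' : P.EFibrant X') (hm1 : m ≫ p1' = p1 ≫ f) (hm2 : m ≫ p2' = p2 ≫ g) :
    ∃ (Q : C) (q1 : Q ⟶ X') (q2 : Q ⟶ Y) (m₁ : Pd ⟶ Q) (m₂ : Q ⟶ Pd'),
      m₁ ≫ m₂ = m ∧ IsPullback m₁ p1 q1 f ∧ IsPullback m₂ q2 p2' g := by
  obtain ⟨Q, q1, q2, hQ⟩ := exists_isBinProd hX' Y
  refine ⟨Q, q1, q2, hQ.lift (p1 ≫ f) p2, h'.lift q1 (q2 ≫ g), ?_, ?_, ?_⟩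
  · exact h'.hom_ext (by simp [hm1]) (by simp [hm2])
  · exact IsPullback.of_right (by simpa using h.isPullback.flip) (by simp) hQ.isPullback.flip
  · exact IsPullback.of_right (by simpa using hQ.isPullback) (by simp) h'.isPullback

lemma weq_of_prodMap (h : IsBinProd p1 p2) (h' : IsBinProd p1' p2') (hX' : P.EFibrant X')
    (hf : P.fib f) (hf' : P.weq f) (hg : P.weq g)
    (hm1 : m ≫ p1' = p1 ≫ f) (hm2 : m ≫ p2' = p2 ≫ g) : P.weq m := by
  obtain ⟨Q, q1, q2, m₁, m₂, rfl, h₁, h₂⟩ := exists_prodMap_factorization h h' hX' hm1 hm2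
  exact P.weq_comp ((P.pb_weq hf h₁.flip).2 hf') ((P.pb_weq (h'.swap.fib_fst hX') h₂).1 hg)

lemma fib_of_prodMap (h : IsBinProd p1 p2) (h' : IsBinProd p1' p2') (hX' : P.EFibrant X')
    (hf : P.fib f) (hg : P.fib g)
    (hm1 : m ≫ p1' = p1 ≫ f) (hm2 : m ≫ p2' = p2 ≫ g) : P.fib m := by
  obtain ⟨Q, q1, q2, m₁, m₂, rfl, h₁, h₂⟩ := exists_prodMap_factorization h h' hX' hm1 hm2
  exact P.fib_comp (fib_of_isPullback hf h₁.flip) (fib_of_isPullback hg h₂.flip)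

end ProdMap

lemma exists_lift_of_trivialFib (hc : ∀ X : C, P.CofModel X) {R Z A : C} {ρ : R ⟶ Z}
    (hρ : P.fib ρ) (hρ' : P.weq ρ) (s : A ⟶ Z) : ∃ s' : A ⟶ R, s' ≫ ρ = s := by
  obtain ⟨W, fb, pb, hW, hpb⟩ := P.pb_exists ρ s hρ
  obtain ⟨σ, hσ⟩ := hc A pb hpb ((P.pb_weq hρ hW).2 hρ')
  exact ⟨σ ≫ fb, by rw [Category.assoc, hW.w, ← Category.assoc, hσ, Category.id_comp]⟩

lemma exists_section_of_weq_comp (hc : ∀ X : C, P.CofModel X) {W X F : C} {r : X ⟶ F}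
    (hr : P.fib r) (x : W ⟶ X) (hxr : P.weq (x ≫ r)) : ∃ s : F ⟶ X, s ≫ r = 𝟙 F := by
  obtain ⟨N, α, q, hα, hq, rfl⟩ := P.F_fac x
  have hqr : P.weq (q ≫ r) := P.weq_of_comp_right hα (by rwa [← Category.assoc])
  obtain ⟨s, hs⟩ := exists_lift_of_trivialFib hc (P.fib_comp hq hr) hqr (𝟙 F)
  exact ⟨s ≫ q, by rwa [Category.assoc]⟩

lemma exists_fFactorization_roof {T X E₁ E₂ : C} {τ₁ : T ⟶ E₁} {q₁ : E₁ ⟶ X} {τ₂ : T ⟶ E₂}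
    {q₂ : E₂ ⟶ X} (hτ₁ : P.weq τ₁) (hq₁ : P.fib q₁) (hτ₂ : P.weq τ₂) (hq₂ : P.fib q₂)
    (h : τ₁ ≫ q₁ = τ₂ ≫ q₂) :
    ∃ (R : C) (α : T ⟶ R) (ρ₁ : R ⟶ E₁) (ρ₂ : R ⟶ E₂), α ≫ ρ₁ = τ₁ ∧ α ≫ ρ₂ = τ₂ ∧
      P.fib ρ₁ ∧ P.weq ρ₁ ∧ P.fib ρ₂ ∧ P.weq ρ₂ ∧ ρ₁ ≫ q₁ = ρ₂ ≫ q₂ := by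
  obtain ⟨Pb, π₂, π₁, hPb, hπ₁⟩ := P.pb_exists q₂ q₁ hq₂
  obtain ⟨R, α, u, hα, hu, hαu⟩ := P.F_fac (hPb.lift τ₂ τ₁ h.symm)
  have h₁ : α ≫ u ≫ π₁ = τ₁ := by rw [← Category.assoc, hαu, hPb.lift_snd]
  have h₂ : α ≫ u ≫ π₂ = τ₂ := by rw [← Category.assoc, hαu, hPb.lift_fst]
  refine ⟨R, α, u ≫ π₁, u ≫ π₂, h₁, h₂, P.fib_comp hu hπ₁, P.weq_of_comp_right hα (h₁ ▸ hτ₁),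
    P.fib_comp hu (fib_of_isPullback hq₁ hPb.flip), P.weq_of_comp_right hα (h₂ ▸ hτ₂), ?_⟩
  rw [Category.assoc, Category.assoc, hPb.w]

lemma WeakLifting.exists_lift (hc : ∀ X : C, P.CofModel X) {A B Cc E : C} {f : A ⟶ B}
    {g : Cc ⟶ B} (h : P.WeakLifting f g) {τ : Cc ⟶ E} {q : E ⟶ B} (hτ : P.weq τ)
    (hq : P.fib q) (hτq : τ ≫ q = g) : ∃ s : A ⟶ E, s ≫ q = f := by
  obtain ⟨E', τ', q', hτ', hq', hτq', s', hs'⟩ := h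
  obtain ⟨R, -, ρ₁, ρ₂, -, -, hρ₁, hρ₁', -, -, hρ⟩ :=
    exists_fFactorization_roof hτ' hq' hτ hq (hτq'.trans hτq.symm)
  obtain ⟨s'', hs''⟩ := exists_lift_of_trivialFib hc hρ₁ hρ₁' s'
  exact ⟨s'' ≫ ρ₂, by rw [Category.assoc, ← hρ, ← Category.assoc, hs'', hs']⟩

lemma exists_fFactorization_pullback {T X T' X' E : C} {j : T ⟶ X} {j' : T' ⟶ X'}
    {t : T ⟶ T'} {φ : X ⟶ X'} (ht : P.weq t) (hφ : P.weq φ) (hj : t ≫ j' = j ≫ φ)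
    {τ : T' ⟶ E} {q : E ⟶ X'} (hτ : P.weq τ) (hq : P.fib q) (hτq : τ ≫ q = j') :
    ∃ (Z : C) (τ₀ : T ⟶ Z) (q₀ : Z ⟶ X) (θ : Z ⟶ E), P.weq τ₀ ∧ P.fib q₀ ∧ τ₀ ≫ q₀ = j ∧
      IsPullback θ q₀ q φ ∧ P.weq θ := by
  obtain ⟨Z, θ, q₀, hZ, hq₀⟩ := P.pb_exists q φ hq
  have hθ : P.weq θ := (P.pb_weq hq hZ).1 hφ
  have hw : (t ≫ τ) ≫ q = j ≫ φ := by rw [Category.assoc, hτq, hj]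
  refine ⟨Z, hZ.lift _ _ hw, q₀, θ, ?_, hq₀, hZ.lift_snd _ _ _, hZ, hθ⟩
  exact P.weq_of_comp_left hθ (by rw [hZ.lift_fst]; exact P.weq_comp ht hτ)

lemma weakLifting_iff_of_weq (hc : ∀ X : C, P.CofModel X) {F T X F' T' X' : C}
    {Δ : F ⟶ X} {j : T ⟶ X} {Δ' : F' ⟶ X'} {j' : T' ⟶ X'} {β : F ⟶ F'} {t : T ⟶ T'}
    {φ : X ⟶ X'} (hβ : P.weq β) (ht : P.weq t) (hφ : P.weq φ)
    (hj : t ≫ j' = j ≫ φ) (hΔ : Δ ≫ φ = β ≫ Δ') :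
    P.WeakLifting Δ j ↔ P.WeakLifting Δ' j' := by
  constructor
  · intro h
    obtain ⟨E, τ, q, hτ, hq, hτq⟩ := P.F_fac j'
    obtain ⟨Z, τ₀, q₀, θ, hτ₀, hq₀, hτq₀, hZ, -⟩ :=
      exists_fFactorization_pullback ht hφ hj hτ hq hτq
    obtain ⟨s, hs⟩ := h.exists_lift hc hτ₀ hq₀ hτq₀
    obtain ⟨Y, fb, pb, hY, hpb⟩ := P.pb_exists q Δ' hq
    have hw : (s ≫ θ) ≫ q = β ≫ Δ' := by
      rw [Category.assoc, hZ.w, ← Category.assoc, hs, hΔ]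
    obtain ⟨σ, hσ⟩ := exists_section_of_weq_comp hc hpb (hY.lift _ _ hw) (by rwa [hY.lift_snd])
    refine ⟨E, τ, q, hτ, hq, hτq, σ ≫ fb, ?_⟩
    rw [Category.assoc, hY.w, ← Category.assoc, hσ, Category.id_comp]
  · rintro ⟨E, τ, q, hτ, hq, hτq, s, hs⟩
    obtain ⟨Z, τ₀, q₀, θ, hτ₀, hq₀, hτq₀, hZ, -⟩ :=
      exists_fFactorization_pullback ht hφ hj hτ hq hτq
    have hw : (β ≫ s) ≫ q = Δ ≫ φ := by rw [Category.assoc, hs, hΔ]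
    exact ⟨Z, τ₀, q₀, hτ₀, hq₀, hτq₀, hZ.lift _ _ hw, hZ.lift_snd _ _ _⟩

lemma exists_isPushout_desc {E' A Z X : C} {pbar : E' ⟶ A} {i : E' ⟶ Z} (hi : P.cofib i)
    {f : A ⟶ X} {k : Z ⟶ X} (hw : pbar ≫ f = i ≫ k) :
    ∃ (J : C) (a : A ⟶ J) (bz : Z ⟶ J) (j : J ⟶ X),
      IsPushout pbar i a bz ∧ a ≫ j = f ∧ bz ≫ j = k := by
  obtain ⟨J, bz, a, hJ, -⟩ := P.po_exists i pbar hi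
  exact ⟨J, a, bz, hJ.flip.desc f k hw, hJ.flip, hJ.flip.inl_desc _ _ _, hJ.flip.inr_desc _ _ _⟩

def OverZigzag (P : PreJCat C) {X : C} : Over X → Over X → Prop :=
  Relation.EqvGen fun k k' => ∃ t : k ⟶ k', P.weq t.left

namespace OverZigzag

variable {X : C} {k k' k'' : Over X}

lemma of_weq {T T' : C} {j : T ⟶ X} {j' : T' ⟶ X} {t : T ⟶ T'} (ht : P.weq t)
    (h : t ≫ j' = j) : P.OverZigzag (Over.mk j) (Over.mk j') :=
  .rel _ _ ⟨Over.homMk t h, ht⟩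

lemma symm (h : P.OverZigzag k k') : P.OverZigzag k' k :=
  Relation.EqvGen.symm _ _ h

lemma trans (h : P.OverZigzag k k') (h' : P.OverZigzag k' k'') : P.OverZigzag k k'' :=
  Relation.EqvGen.trans _ _ _ h h'

lemma comp {Y : C} (h : P.OverZigzag k k') (φ : X ⟶ Y) :
    P.OverZigzag (Over.mk (k.hom ≫ φ)) (Over.mk (k'.hom ≫ φ)) := by
  induction h with
  | rel k k' h =>
    obtain ⟨t, ht⟩ := h
    exact of_weq ht (by rw [← Category.assoc, Over.w t])
  | refl => exact .refl _
  | symm _ _ _ ih => exact ih.symm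
  | trans _ _ _ _ _ ih ih' => exact ih.trans ih'

end OverZigzag

lemma overZigzag_of_isPushout {E' A Z J J' X : C} {pbar : E' ⟶ A} {i : E' ⟶ Z}
    {a : A ⟶ J} {bz : Z ⟶ J} {a' : A ⟶ J'} {bz' : Z ⟶ J'}
    (hpo : IsPushout pbar i a bz) (hpo' : IsPushout pbar i a' bz')
    {h : J ⟶ X} {h' : J' ⟶ X} (ha : a' ≫ h' = a ≫ h) (hbz : bz' ≫ h' = bz ≫ h) :
    P.OverZigzag (Over.mk h) (Over.mk h') :=
  .of_weq (weq_of_isIso (hpo.isoIsPushout _ _ hpo').hom)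
    (hpo.hom_ext (by simp [ha]) (by simp [hbz]))

/-- The comparison map `J ⟶ J'` is a pushout of `k`. -/
lemma overZigzag_of_isPushout_comp {E' A Z Z' J J' X : C} {pbar : E' ⟶ A} {i : E' ⟶ Z}
    {k : Z ⟶ Z'} (hk : P.cofib k) (hk' : P.weq k)
    {a : A ⟶ J} {bz : Z ⟶ J} {a' : A ⟶ J'} {bz' : Z' ⟶ J'}
    (hpo : IsPushout pbar i a bz) (hpo' : IsPushout pbar (i ≫ k) a' bz')
    {h : J ⟶ X} {h' : J' ⟶ X} (ha : a' ≫ h' = a ≫ h) (hbz : k ≫ bz' ≫ h' = bz ≫ h) :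
    P.OverZigzag (Over.mk h) (Over.mk h') := by
  set ω := hpo.desc a' (k ≫ bz') (by rw [hpo'.w, Category.assoc])
  have hsq : IsPushout bz k ω bz' :=
    IsPushout.of_top (by simpa [ω] using hpo') (hpo.inr_desc _ _ _) hpo
  refine .of_weq ((P.po_weq hk hsq.flip).2 hk') (hpo.hom_ext ?_ ?_)
  · simp [ω, ha]
  · simp [ω, hbz]

/-- Both pushouts map by weak equivalences to the pushout along a common refinement of the two
C-factorizations. -/
lemma overZigzag_of_cFactorizations {E' A E₀ Z₁ Z₂ J₁ J₂ X : C} {pbar : E' ⟶ A}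
    {g₀ : E' ⟶ E₀} {c : E₀ ⟶ X}
    {i₁ : E' ⟶ Z₁} {σ₁ : Z₁ ⟶ E₀} (hi₁ : P.cofib i₁) (hσ₁ : P.weq σ₁) (hiσ₁ : i₁ ≫ σ₁ = g₀)
    {i₂ : E' ⟶ Z₂} {σ₂ : Z₂ ⟶ E₀} (hi₂ : P.cofib i₂) (hσ₂ : P.weq σ₂) (hiσ₂ : i₂ ≫ σ₂ = g₀)
    {a₁ : A ⟶ J₁} {bz₁ : Z₁ ⟶ J₁} (hpo₁ : IsPushout pbar i₁ a₁ bz₁)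
    {a₂ : A ⟶ J₂} {bz₂ : Z₂ ⟶ J₂} (hpo₂ : IsPushout pbar i₂ a₂ bz₂)
    {h₁ : J₁ ⟶ X} {h₂ : J₂ ⟶ X} (ha : a₁ ≫ h₁ = a₂ ≫ h₂)
    (hb₁ : bz₁ ≫ h₁ = σ₁ ≫ c) (hb₂ : bz₂ ≫ h₂ = σ₂ ≫ c) :
    P.OverZigzag (Over.mk h₁) (Over.mk h₂) := by
  obtain ⟨Z₀, n₁, n₂, hZ₀, hn₂⟩ := P.po_exists i₁ i₂ hi₁
  obtain ⟨Z, c', σ, hc', hσ, hc'σ⟩ := P.C_fac (hZ₀.desc σ₁ σ₂ (hiσ₁.trans hiσ₂.symm))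
  have hk₁ : (n₁ ≫ c') ≫ σ = σ₁ := by rw [Category.assoc, hc'σ, hZ₀.inl_desc]
  have hk₂ : (n₂ ≫ c') ≫ σ = σ₂ := by rw [Category.assoc, hc'σ, hZ₀.inr_desc]
  have hik : i₁ ≫ n₁ ≫ c' = i₂ ≫ n₂ ≫ c' := by rw [← Category.assoc, hZ₀.w, Category.assoc]
  have hn₁ : P.cofib n₁ := cofib_of_isPushout hi₂ hZ₀.flip
  have hi : P.cofib (i₁ ≫ n₁ ≫ c') := P.cofib_comp hi₁ (P.cofib_comp hn₁ hc')
  obtain ⟨J, a, bz, js, hJ, ha', hbz'⟩ := exists_isPushout_desc hi (f := a₁ ≫ h₁) (k := σ ≫ c)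
    (by rw [← Category.assoc, hpo₁.w, Category.assoc, hb₁, ← hk₁]; simp only [Category.assoc])
  refine (overZigzag_of_isPushout_comp (P.cofib_comp hn₁ hc')
      (P.weq_of_comp_left hσ (hk₁ ▸ hσ₁)) hpo₁ hJ ha' ?_).trans
    (overZigzag_of_isPushout_comp (P.cofib_comp hn₂ hc')
      (P.weq_of_comp_left hσ (hk₂ ▸ hσ₂)) hpo₂ (hik ▸ hJ) (ha'.trans ha) ?_).symm
  · rw [hb₁, Category.assoc, hbz', ← hk₁, Category.assoc, Category.assoc]
  · rw [hb₂, Category.assoc, hbz', ← hk₂, Category.assoc, Category.assoc]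

def IsJoinOver (P : PreJCat C) {A E X J : C} (f : A ⟶ X) (q : E ⟶ X) (j : J ⟶ X) : Prop :=
  ∃ (E' Z : C) (fbar : E' ⟶ E) (pbar : E' ⟶ A) (i : E' ⟶ Z) (σ : Z ⟶ E) (a : A ⟶ J)
    (bz : Z ⟶ J), IsPullback fbar pbar q f ∧ P.cofib i ∧ P.weq σ ∧ i ≫ σ = fbar ∧
    IsPushout pbar i a bz ∧ a ≫ j = f ∧ bz ≫ j = σ ≫ q

lemma isJoin_iff {A Cc X J : C} {f : A ⟶ X} {g : Cc ⟶ X} {j : J ⟶ X} :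
    P.IsJoin f g j ↔ ∃ (E : C) (τ : Cc ⟶ E) (q : E ⟶ X),
      P.weq τ ∧ P.fib q ∧ τ ≫ q = g ∧ P.IsJoinOver f q j :=
  Iff.rfl

lemma exists_isJoinOver {A E X : C} (f : A ⟶ X) {q : E ⟶ X} (hq : P.fib q) :
    ∃ (J : C) (j : J ⟶ X), P.IsJoinOver f q j := by
  obtain ⟨E', fbar, pbar, hE', -⟩ := P.pb_exists q f hq
  obtain ⟨Z, i, σ, hi, hσ, hiσ⟩ := P.C_fac fbar
  obtain ⟨J, a, bz, j, hJ, ha, hbz⟩ := exists_isPushout_desc hi (f := f) (k := σ ≫ q)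
    (by rw [← Category.assoc, hiσ, hE'.w])
  exact ⟨J, j, E', Z, fbar, pbar, i, σ, a, bz, hE', hi, hσ, hiσ, hJ, ha, hbz⟩

lemma exists_isJoin {A Cc X : C} (f : A ⟶ X) (g : Cc ⟶ X) :
    ∃ (J : C) (j : J ⟶ X), P.IsJoin f g j := by
  obtain ⟨E, τ, q, hτ, hq, hτq⟩ := P.F_fac g
  obtain ⟨J, j, hj⟩ := exists_isJoinOver f hq
  exact ⟨J, j, isJoin_iff.2 ⟨E, τ, q, hτ, hq, hτq, hj⟩⟩

/-- Base change along `ρ` turns the C-factorization and the pushout defining `js` into ones over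
`qt`, which are then compared with those defining `jt`. -/
lemma IsJoinOver.overZigzag_of_trivialFib {A X Es Et Js Jt : C} {f : A ⟶ X} {qs : Es ⟶ X}
    {qt : Et ⟶ X} {ρ : Es ⟶ Et} (hρ : P.fib ρ) (hρ' : P.weq ρ) (hρq : ρ ≫ qt = qs)
    {js : Js ⟶ X} {jt : Jt ⟶ X} (hs : P.IsJoinOver f qs js) (ht : P.IsJoinOver f qt jt) :
    P.OverZigzag (Over.mk js) (Over.mk jt) := by
  obtain ⟨Eps, Zs, fbs, pbs, is, σs, aₛ, bzs, hpbs, his, hσs, hiσs, hpos, has, hbzs⟩ := hs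
  obtain ⟨Ept, Zt, fbt, pbt, it, σt, aₜ, bzt, hpbt, hit, hσt, hiσt, hpot, hat, hbzt⟩ := ht
  have hm := IsPullback.of_bot' (hρq ▸ hpbs) hpbt
  set m := hpbt.lift (fbs ≫ ρ) pbs (by rw [Category.assoc, hρq, hpbs.w])
  obtain ⟨Z'', nZ, nE, hZ'', hnE⟩ := P.po_exists is m his
  set σ'' := hZ''.desc (σs ≫ ρ) fbt (by rw [← Category.assoc, hiσs, hm.w])
  have hσ'' : nZ ≫ σ'' = σs ≫ ρ := hZ''.inl_desc _ _ _
  have hwσ'' : P.weq σ'' := P.weq_of_comp_right ((P.po_weq his hZ'').1 ((P.pb_weq hρ hm).2 hρ'))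
    (hσ''.symm ▸ P.weq_comp hσs hρ')
  obtain ⟨J'', a'', bz'', j'', hJ'', ha'', hbz''⟩ := exists_isPushout_desc hnE (f := f)
    (k := σ'' ≫ qt) (by rw [← Category.assoc, hZ''.inr_desc, hpbt.w])
  have hpaste : IsPushout pbs is a'' (nZ ≫ bz'') := by
    simpa [m] using hZ''.flip.paste_horiz hJ''
  refine (overZigzag_of_isPushout hpos hpaste (ha''.trans has.symm) ?_).trans
    (overZigzag_of_cFactorizations hnE hwσ'' (hZ''.inr_desc _ _ _) hit hσt hiσt hJ'' hpot
      (ha''.trans hat.symm) hbz'' hbzt)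
  rw [Category.assoc, hbz'', ← Category.assoc, hσ'', hbzs, Category.assoc, hρq]

/-- Both joins compare with a join over a common refinement of the two F-factorizations. -/
lemma IsJoin.overZigzag {A Cc X J₁ J₂ : C} {f : A ⟶ X} {g : Cc ⟶ X} {j₁ : J₁ ⟶ X}
    {j₂ : J₂ ⟶ X} (h₁ : P.IsJoin f g j₁) (h₂ : P.IsJoin f g j₂) :
    P.OverZigzag (Over.mk j₁) (Over.mk j₂) := by
  obtain ⟨E₁, τ₁, q₁, hτ₁, hq₁, hτq₁, hj₁⟩ := isJoin_iff.1 h₁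
  obtain ⟨E₂, τ₂, q₂, hτ₂, hq₂, hτq₂, hj₂⟩ := isJoin_iff.1 h₂
  obtain ⟨R, -, ρ₁, ρ₂, -, -, hρ₁, hρ₁', hρ₂, hρ₂', hρ⟩ :=
    exists_fFactorization_roof hτ₁ hq₁ hτ₂ hq₂ (hτq₁.trans hτq₂.symm)
  obtain ⟨J, j, hj⟩ := exists_isJoinOver f (P.fib_comp hρ₁ hq₁)
  exact (hj.overZigzag_of_trivialFib hρ₁ hρ₁' rfl hj₁).symm.trans
    (hj.overZigzag_of_trivialFib hρ₂ hρ₂' hρ.symm hj₂)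

lemma isHPB_of_weq {D A B : C} {m : D ⟶ A} {f : A ⟶ B} {f' : D ⟶ B} (hm : P.weq m)
    (h : m ≫ f = f') : P.IsHPB f' m (𝟙 B) f :=
  ⟨by simp [h], B, 𝟙 B, 𝟙 B, weq_of_isIso _, fib_of_isIso _, by simp, A, f, 𝟙 A,
    IsPullback.id_vert f, m, hm, by simp [h], by simp⟩

lemma isHPB_of_isPullback {D A Cc B : C} {f' : D ⟶ Cc} {g' : D ⟶ A} {g : Cc ⟶ B} {f : A ⟶ B}
    (hf : P.fib f) (hpb : IsPullback g' f' f g) : P.IsHPB f' g' g f := by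
  obtain ⟨M, τ, q, hτ, hq, rfl⟩ := P.F_fac g
  obtain ⟨Pt, fb, pb, hPt, hpb'⟩ := P.pb_exists f q hf
  exact ⟨hpb.w.symm, M, τ, q, hτ, hq, rfl, Pt, pb, fb, hPt.flip, _,
    (P.pb_weq hpb' (IsPullback.of_right' hpb hPt)).1 hτ, hPt.lift_snd _ _ _, hPt.lift_fst _ _ _⟩

lemma isHPO_of_isPushout {A X Y Q : C} {i : A ⟶ X} {g : A ⟶ Y} {inl : X ⟶ Q} {inr : Y ⟶ Q}
    (hi : P.cofib i) (h : IsPushout i g inl inr) : P.IsHPO i g inl inr :=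
  ⟨h.w, X, i, 𝟙 X, hi, weq_of_isIso _, by simp, Q, inl, inr, h, 𝟙 Q, weq_of_isIso _, by simp,
    by simp⟩

/-- A stage of the fat-wedge construction for `r : E ⟶ F`: `j` plays `jₙ : Tⁿ ⟶ Fⁿ⁺¹` and
`Δ` the diagonal `F ⟶ Fⁿ⁺¹`. -/
structure WedgeData (P : PreJCat C) where
  {E F T Pw : C}
  r : E ⟶ F
  j : T ⟶ Pw
  Δ : F ⟶ Pw
  eFibrant_F : P.EFibrant F
  eFibrant_Pw : P.EFibrant Pw

namespace WedgeData

structure Hom (a b : WedgeData P) where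
  w : a.E ⟶ b.E
  β : a.F ⟶ b.F
  t : a.T ⟶ b.T
  φ : a.Pw ⟶ b.Pw
  weq_w : P.weq w
  fib_β : P.fib β
  weq_β : P.weq β
  weq_t : P.weq t
  fib_φ : P.fib φ
  weq_φ : P.weq φ
  w_r : w ≫ b.r = a.r ≫ β
  t_j : t ≫ b.j = a.j ≫ φ
  Δ_φ : a.Δ ≫ φ = β ≫ b.Δ

def Hom.id (a : WedgeData P) : a.Hom a :=
  ⟨𝟙 _, 𝟙 _, 𝟙 _, 𝟙 _, weq_of_isIso _, fib_of_isIso _, weq_of_isIso _, weq_of_isIso _,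
    fib_of_isIso _, weq_of_isIso _, by simp, by simp, by simp⟩

def Linked : WedgeData P → WedgeData P → Prop :=
  Relation.EqvGen fun a b => Nonempty (a.Hom b)

variable {a b c : WedgeData P}

lemma Linked.of_hom (e : a.Hom b) : a.Linked b := .rel _ _ ⟨e⟩

lemma Linked.symm (h : a.Linked b) : b.Linked a := Relation.EqvGen.symm _ _ h

lemma Linked.trans (h : a.Linked b) (h' : b.Linked c) : a.Linked c :=
  Relation.EqvGen.trans _ _ _ h h'

lemma Linked.weakLifting_iff (hc : ∀ X : C, P.CofModel X) (h : a.Linked b) :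
    P.WeakLifting a.Δ a.j ↔ P.WeakLifting b.Δ b.j := by
  induction h with
  | rel a b e =>
    obtain ⟨e⟩ := e
    exact weakLifting_iff_of_weq hc e.weq_β e.weq_t e.weq_φ e.t_j e.Δ_φ
  | refl => exact Iff.rfl
  | symm _ _ _ ih => exact ih.symm
  | trans _ _ _ _ _ ih ih' => exact ih.trans ih'

lemma linked_of_overZigzag {E F X : C} (r : E ⟶ F) (Δ : F ⟶ X) (hF : P.EFibrant F)
    (hX : P.EFibrant X) {k k' : Over X} (h : P.OverZigzag k k') :
    Linked ⟨r, k.hom, Δ, hF, hX⟩ ⟨r, k'.hom, Δ, hF, hX⟩ := by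
  induction h with
  | rel k k' h =>
    obtain ⟨t, ht⟩ := h
    exact .of_hom ⟨𝟙 _, 𝟙 _, t.left, 𝟙 _, weq_of_isIso _, fib_of_isIso _, weq_of_isIso _, ht,
      fib_of_isIso _, weq_of_isIso _, by simp, by simp, by simp⟩
  | refl => exact .refl _
  | symm _ _ _ ih => exact ih.symm
  | trans _ _ _ _ _ ih ih' => exact ih.trans ih'

/-- The data of one step `IsFatWedge.succ`: `jProd = j × 𝟙` and `rProd = 𝟙 × r` into
`Pw' = Pw × F`, their join `j'`, and the diagonal `Δ' = (Δ, 𝟙)`. -/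
structure Extension (a : WedgeData P) where
  {Pw' TF PwE T' : C}
  pr₁ : Pw' ⟶ a.Pw
  pr₂ : Pw' ⟶ a.F
  isBinProd_pr : IsBinProd pr₁ pr₂
  q₁ : TF ⟶ a.T
  q₂ : TF ⟶ a.F
  isBinProd_q : IsBinProd q₁ q₂
  r₁ : PwE ⟶ a.Pw
  r₂ : PwE ⟶ a.E
  isBinProd_r : IsBinProd r₁ r₂
  jProd : TF ⟶ Pw'
  jProd_pr : jProd ≫ pr₁ = q₁ ≫ a.j ∧ jProd ≫ pr₂ = q₂
  rProd : PwE ⟶ Pw'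
  rProd_pr : rProd ≫ pr₁ = r₁ ∧ rProd ≫ pr₂ = r₂ ≫ a.r
  j' : T' ⟶ Pw'
  isJoin : P.IsJoin jProd rProd j'
  Δ' : a.F ⟶ Pw'
  Δ'_pr : Δ' ≫ pr₁ = a.Δ ∧ Δ' ≫ pr₂ = 𝟙 a.F

def Extension.toWedgeData (X : a.Extension) : WedgeData P :=
  ⟨a.r, X.j', X.Δ', a.eFibrant_F, X.isBinProd_pr.eFibrant a.eFibrant_Pw a.eFibrant_F⟩

lemma exists_extension (a : WedgeData P) : Nonempty a.Extension := by
  obtain ⟨Pw', pr₁, pr₂, hpr⟩ := exists_isBinProd a.eFibrant_Pw a.F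
  obtain ⟨TF, q₂, q₁, hq⟩ := exists_isBinProd a.eFibrant_F a.T
  obtain ⟨PwE, r₁, r₂, hr⟩ := exists_isBinProd a.eFibrant_Pw a.E
  obtain ⟨T', j', hj'⟩ := exists_isJoin (P := P) (hpr.lift (q₁ ≫ a.j) q₂) (hpr.lift r₁ (r₂ ≫ a.r))
  exact ⟨⟨pr₁, pr₂, hpr, q₁, q₂, hq.swap, r₁, r₂, hr, _, ⟨by simp, by simp⟩, _,
    ⟨by simp, by simp⟩, j', hj', hpr.lift a.Δ (𝟙 _), ⟨by simp, by simp⟩⟩⟩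

/-- The comparison maps are `φ × β`, `t × β` and `φ × w`. -/
lemma Extension.exists_comparison (e : a.Hom b) (Xa : a.Extension) (Xb : b.Extension) :
    ∃ (φ' : Xa.Pw' ⟶ Xb.Pw') (u : Xa.TF ⟶ Xb.TF) (v : Xa.PwE ⟶ Xb.PwE),
      P.fib φ' ∧ P.weq φ' ∧ P.weq u ∧ P.weq v ∧ u ≫ Xb.jProd = Xa.jProd ≫ φ' ∧
      v ≫ Xb.rProd = Xa.rProd ≫ φ' ∧ Xa.Δ' ≫ φ' = e.β ≫ Xb.Δ' := by
  have hφ'₁ := Xb.isBinProd_pr.lift_fst (Xa.pr₁ ≫ e.φ) (Xa.pr₂ ≫ e.β)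
  have hφ'₂ := Xb.isBinProd_pr.lift_snd (Xa.pr₁ ≫ e.φ) (Xa.pr₂ ≫ e.β)
  have hu₁ := Xb.isBinProd_q.lift_fst (Xa.q₁ ≫ e.t) (Xa.q₂ ≫ e.β)
  have hu₂ := Xb.isBinProd_q.lift_snd (Xa.q₁ ≫ e.t) (Xa.q₂ ≫ e.β)
  have hv₁ := Xb.isBinProd_r.lift_fst (Xa.r₁ ≫ e.φ) (Xa.r₂ ≫ e.w)
  have hv₂ := Xb.isBinProd_r.lift_snd (Xa.r₁ ≫ e.φ) (Xa.r₂ ≫ e.w)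
  refine ⟨_, _, _,
    fib_of_prodMap Xa.isBinProd_pr Xb.isBinProd_pr b.eFibrant_Pw e.fib_φ e.fib_β hφ'₁ hφ'₂,
    weq_of_prodMap Xa.isBinProd_pr Xb.isBinProd_pr b.eFibrant_Pw e.fib_φ e.weq_φ e.weq_β hφ'₁ hφ'₂,
    weq_of_prodMap Xa.isBinProd_q.swap Xb.isBinProd_q.swap b.eFibrant_F e.fib_β e.weq_β e.weq_t
      hu₂ hu₁,
    weq_of_prodMap Xa.isBinProd_r Xb.isBinProd_r b.eFibrant_Pw e.fib_φ e.weq_φ e.weq_w hv₁ hv₂,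
    Xb.isBinProd_pr.hom_ext ?_ ?_, Xb.isBinProd_pr.hom_ext ?_ ?_, Xb.isBinProd_pr.hom_ext ?_ ?_⟩
  · simp [Xb.jProd_pr.1, reassoc_of% hu₁, e.t_j, reassoc_of% Xa.jProd_pr.1, hφ'₁]
  · simp [Xb.jProd_pr.2, hu₂, reassoc_of% Xa.jProd_pr.2, hφ'₂]
  · simp [Xb.rProd_pr.1, hv₁, reassoc_of% Xa.rProd_pr.1, hφ'₁]
  · simp [Xb.rProd_pr.2, reassoc_of% hv₂, e.w_r, reassoc_of% Xa.rProd_pr.2, hφ'₂]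
  · simp [Xb.Δ'_pr.1, reassoc_of% Xa.Δ'_pr.1, hφ'₁, e.Δ_φ]
  · simp [Xb.Δ'_pr.2, reassoc_of% Xa.Δ'_pr.2, hφ'₂]

end WedgeData

lemma IsFatWedge.eFibrant {E B T Pw : C} {p : E ⟶ B} {n : ℕ} {j : T ⟶ Pw} {Δ : B ⟶ Pw}
    (h : P.IsFatWedge p n j Δ) (hB : P.EFibrant B) : P.EFibrant Pw := by
  induction h with
  | zero => exact hB
  | succ _ hP _ _ _ _ _ _ ih => exact hP.eFibrant ih hB

def IsFatWedge.toWedgeData {E B T Pw : C} {p : E ⟶ B} {n : ℕ} {j : T ⟶ Pw} {Δ : B ⟶ Pw}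
    (h : P.IsFatWedge p n j Δ) (hB : P.EFibrant B) : WedgeData P :=
  ⟨p, j, Δ, hB, h.eFibrant hB⟩

lemma exists_isFatWedge {E B : C} (p : E ⟶ B) (hB : P.EFibrant B) (n : ℕ) :
    ∃ (T Pw : C) (j : T ⟶ Pw) (Δ : B ⟶ Pw), P.IsFatWedge p n j Δ := by
  induction n with
  | zero => exact ⟨E, B, p, 𝟙 B, .zero⟩
  | succ n ih =>
    obtain ⟨T, Pw, j, Δ, h⟩ := ih
    obtain ⟨X⟩ := (h.toWedgeData hB).exists_extension
    exact ⟨_, _, X.j', X.Δ', .succ h X.isBinProd_pr X.isBinProd_q X.isBinProd_r X.jProd_pr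
      X.rProd_pr X.isJoin X.Δ'_pr⟩

end PreJCat

namespace JCat

open PreJCat PreJCat.WedgeData

variable (J : JCat C)

lemma isHPO_of_isPullback {E A Z Q E' A' : C} {pbar : E ⟶ A} {i : E ⟶ Z}
    {a : A ⟶ Q} {bz : Z ⟶ Q} (hi : J.cofib i) (hpo : IsPushout pbar i a bz) (hpbar : J.fib pbar)
    {m : E' ⟶ E} {pbar' : E' ⟶ A'} {u : A' ⟶ A} (hpb : IsPullback m pbar' pbar u)
    (hu : J.weq u) : J.IsHPO (m ≫ i) pbar' bz (u ≫ a) :=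
  J.cube (by rw [Category.assoc, ← hpo.w, ← Category.assoc, hpb.w, Category.assoc])
    (isHPO_of_isPushout hi hpo.flip) (isHPB_of_weq ((J.pb_weq hpbar hpb).1 hu) rfl)
    (isHPB_of_isPullback hpbar hpb) (isHPB_of_weq (weq_of_isIso _) (Category.id_comp _))
    (isHPB_of_weq hu rfl)

/-- The F-factorization of `g'` pulls back along `φ` to one of `g`, over which a join of `f` and
`g` is built. By the cube axiom, the base change along `u` of the pushout defining `j'` is a
homotopy pushout, and this compares the two joins. -/
theorem overZigzag_of_isJoin {A Cc X A' Cc' X' Ja Jb : C} {f : A ⟶ X}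
    {g : Cc ⟶ X} {j : Ja ⟶ X} {f' : A' ⟶ X'} {g' : Cc' ⟶ X'} {j' : Jb ⟶ X'}
    (hj : J.IsJoin f g j) (hj' : J.IsJoin f' g' j') {u : A ⟶ A'} {v : Cc ⟶ Cc'} {φ : X ⟶ X'}
    (hu : J.weq u) (hv : J.weq v) (hφ : J.weq φ) (hf : u ≫ f' = f ≫ φ) (hg : v ≫ g' = g ≫ φ) :
    J.OverZigzag (Over.mk (j ≫ φ)) (Over.mk j') := by
  obtain ⟨E, τ, q, hτ, hq, hτq, Eb, Zb, fbarb, pbarb, ib, σb, ab, bzb, hpbb, hib, hσb, hiσb,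
    hpob, hab, hbzb⟩ := hj'
  obtain ⟨Ea, τa, qa, θ, hτa, hqa, hτqa, hθ, hθ'⟩ :=
    exists_fFactorization_pullback hv hφ hg hτ hq hτq
  obtain ⟨Epa, fbara, pbara, hpba, -⟩ := J.pb_exists qa f hqa
  have hm := IsPullback.of_right'
    (by rw [hf]; exact hpba.paste_horiz hθ : IsPullback (fbara ≫ θ) pbara q (u ≫ f')) hpbb
  obtain ⟨-, Z₂, i₂, σ₂, hi₂, hσ₂, hiσ₂, Q, inlQ, inrQ, hQ, ω, hω, hinlω, hinrω⟩ :=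
    J.isHPO_of_isPullback hib hpob (fib_of_isPullback hq hpbb) hm hu
  obtain ⟨Za, ia, σa, hia, hσa, hiσa⟩ := J.C_fac fbara
  obtain ⟨Ja', aa, bza, ja, hJa, haa, hbza⟩ := exists_isPushout_desc hia (f := f)
    (k := σa ≫ qa) (by rw [← Category.assoc, hiσa, hpba.w])
  have hja : J.IsJoin f g ja := isJoin_iff.2
    ⟨Ea, τa, qa, hτa, hqa, hτqa, Epa, Za, fbara, pbara, ia, σa, aa, bza, hpba, hia, hσa, hiσa,
      hJa, haa, hbza⟩
  refine ((hj.overZigzag hja).comp φ).trans ((overZigzag_of_cFactorizations (c := q)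
    hia (J.weq_comp hσa hθ') (by rw [← Category.assoc, hiσa])
    hi₂ (J.weq_comp hσ₂ hσb) ?_ hJa hQ.flip (h₁ := ja ≫ φ) (h₂ := ω ≫ j') ?_ ?_ ?_).trans
    (OverZigzag.of_weq hω rfl))
  · rw [← Category.assoc, hiσ₂, Category.assoc, hiσb, hpbb.lift_fst]
  · rw [← Category.assoc, haa, ← Category.assoc, hinrω, Category.assoc, hab, hf]
  · rw [← Category.assoc, hbza, Category.assoc, ← hθ.w, Category.assoc]
  · rw [← Category.assoc, hinlω, Category.assoc, hbzb, Category.assoc]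

theorem linked_extension_of_hom {a b : WedgeData J.toPreJCat} (e : a.Hom b)
    (Xa : a.Extension) (Xb : b.Extension) : Xa.toWedgeData.Linked Xb.toWedgeData := by
  obtain ⟨φ', u, v, hφ', hφ'', hu, hv, hu', hv', hΔ⟩ := Xa.exists_comparison e Xb
  have e' : Xa.toWedgeData.Hom ⟨b.r, Xa.j' ≫ φ', Xb.Δ', b.eFibrant_F, Xb.toWedgeData.eFibrant_Pw⟩ :=
    ⟨e.w, e.β, 𝟙 _, φ', e.weq_w, e.fib_β, e.weq_β, weq_of_isIso (𝟙 Xa.T'), hφ', hφ'', e.w_r,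
      Category.id_comp _, hΔ⟩
  exact (Linked.of_hom e').trans (linked_of_overZigzag b.r Xb.Δ' _ _
    (J.overZigzag_of_isJoin Xa.isJoin Xb.isJoin hu hv hφ'' hu' hv'))

theorem linked_extension_of_linked {a b : WedgeData J.toPreJCat} (h : a.Linked b)
    (Xa : a.Extension) (Xb : b.Extension) : Xa.toWedgeData.Linked Xb.toWedgeData := by
  induction h with
  | rel a b e => exact J.linked_extension_of_hom e.some Xa Xb
  | refl a => exact J.linked_extension_of_hom (Hom.id a) Xa Xb
  | symm a b _ ih => exact (ih Xb Xa).symm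
  | trans a b c _ _ ih ih' =>
    obtain ⟨Xm⟩ := b.exists_extension
    exact (ih Xa Xm).trans (ih' Xm Xb)

theorem linked_of_isFatWedge {E B E' B' : C} {p : E ⟶ B} {p' : E' ⟶ B'} (hB : J.EFibrant B)
    (hB' : J.EFibrant B') {w : E ⟶ E'} {β : B ⟶ B'} (hw : J.weq w) (hβ : J.fib β)
    (hβ' : J.weq β) (hsq : w ≫ p' = p ≫ β) (n : ℕ) {T Pw T' Pw' : C} {j : T ⟶ Pw}
    {Δ : B ⟶ Pw} {j' : T' ⟶ Pw'} {Δ' : B' ⟶ Pw'} (h : J.IsFatWedge p n j Δ)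
    (h' : J.IsFatWedge p' n j' Δ') : (h.toWedgeData hB).Linked (h'.toWedgeData hB') := by
  induction n generalizing T Pw T' Pw' with
  | zero =>
    cases h; cases h'
    exact .of_hom ⟨w, β, w, β, hw, hβ, hβ', hw, hβ, hβ', hsq, hsq,
      (Category.id_comp β).trans (Category.comp_id β).symm⟩
  | succ n ih =>
    cases h with
    | succ hprev hP hTF hPwE hjProd hrProd hjoin hΔ =>
    cases h' with
    | succ hprev' hP' hTF' hPwE' hjProd' hrProd' hjoin' hΔ' =>
    exact J.linked_extension_of_linked (ih hprev hprev')
      ⟨_, _, hP, _, _, hTF, _, _, hPwE, _, hjProd, _, hrProd, _, hjoin, _, hΔ⟩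
      ⟨_, _, hP', _, _, hTF', _, _, hPwE', _, hjProd', _, hrProd', _, hjoin', _, hΔ'⟩

theorem wsecatE_eq_of_weq (hc : ∀ X : C, J.CofModel X) {E B E' B' : C} {p : E ⟶ B}
    {p' : E' ⟶ B'} (hB : J.EFibrant B) (hB' : J.EFibrant B') {w : E ⟶ E'} {β : B ⟶ B'}
    (hw : J.weq w) (hβ : J.fib β) (hβ' : J.weq β) (hsq : w ≫ p' = p ≫ β) :
    J.WsecatE p = J.WsecatE p' := by
  have hlinked := J.linked_of_isFatWedge hB hB' hw hβ hβ' hsq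
  unfold WsecatE
  congr 1
  ext n
  refine exists_congr fun m => and_congr_right fun _ => ⟨?_, ?_⟩
  · rintro ⟨T, Pw, j, Δ, h, hl⟩
    obtain ⟨T', Pw', j', Δ', h'⟩ := exists_isFatWedge p' hB' m
    exact ⟨T', Pw', j', Δ', h', ((hlinked m h h').weakLifting_iff hc).1 hl⟩
  · rintro ⟨T', Pw', j', Δ', h', hl⟩
    obtain ⟨T, Pw, j, Δ, h⟩ := exists_isFatWedge p hB m
    exact ⟨T, Pw, j, Δ, h, ((hlinked m h h').weakLifting_iff hc).2 hl⟩

theorem wsecatE_comp_eq_of_square (hc : ∀ X : C, J.CofModel X) {E B E' B' F F' : C}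
    {p : E ⟶ B} {p' : E' ⟶ B'} {wE : E ⟶ E'} {wB : B ⟶ B'} (hwE : J.weq wE) (hwB : J.weq wB)
    (hsq : wE ≫ p' = p ≫ wB) {τ : B ⟶ F} {τ' : B' ⟶ F'} (hτ : J.weq τ) (hF : J.EFibrant F)
    (hτ' : J.weq τ') (hF' : J.EFibrant F') :
    J.WsecatE (p ≫ τ) = J.WsecatE (p' ≫ τ') := by
  obtain ⟨G, α, g₁, g₂, hα₁, hα₂, hg₁, hg₁', hg₂, hg₂', -⟩ :=
    exists_fFactorization_roof hτ hF (J.weq_comp hwB hτ') hF' (by simp)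
  have hG : J.EFibrant G := hF.of_fib hg₁
  calc J.WsecatE (p ≫ τ) = J.WsecatE (p ≫ α) :=
        (J.wsecatE_eq_of_weq hc hG hF (weq_of_isIso (𝟙 E)) hg₁ hg₁' (by simp [hα₁])).symm
    _ = J.WsecatE (p ≫ wB ≫ τ') :=
        J.wsecatE_eq_of_weq hc hG hF' (weq_of_isIso (𝟙 E)) hg₂ hg₂' (by simp [hα₂])
    _ = J.WsecatE (p' ≫ τ') :=
        J.wsecatE_eq_of_weq hc hF' hF' hwE (fib_of_isIso (𝟙 F')) (weq_of_isIso _)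
          (by rw [Category.comp_id, reassoc_of% hsq])

theorem wsecat_eq_wsecatE (hc : ∀ X : C, J.CofModel X) {E B F : C} (p : E ⟶ B) {τ : B ⟶ F}
    (hτ : J.weq τ) (hF : J.EFibrant F) : J.Wsecat p = J.WsecatE (p ≫ τ) :=
  le_antisymm (iInf_le_of_le F (iInf_le_of_le τ (iInf_le _ ⟨hτ, hF⟩)))
    (le_iInf fun _ => le_iInf fun _ => le_iInf fun h =>
      (J.wsecatE_comp_eq_of_square hc (weq_of_isIso (𝟙 E)) (weq_of_isIso (𝟙 B)) (by simp)
        hτ hF h.1 h.2).le)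

theorem wsecat_eq_of_square (hc : ∀ X : C, J.CofModel X) {E B E' B' : C} {p : E ⟶ B}
    {p' : E' ⟶ B'} {wE : E ⟶ E'} {wB : B ⟶ B'} (hwE : J.weq wE) (hwB : J.weq wB)
    (hsq : wE ≫ p' = p ≫ wB) : J.Wsecat p = J.Wsecat p' := by
  obtain ⟨F, τ, hτ, hF⟩ := exists_eFibrant_replacement (P := J.toPreJCat) B
  obtain ⟨F', τ', hτ', hF'⟩ := exists_eFibrant_replacement (P := J.toPreJCat) B'
  rw [J.wsecat_eq_wsecatE hc p hτ hF, J.wsecat_eq_wsecatE hc p' hτ' hF']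
  exact J.wsecatE_comp_eq_of_square hc hwE hwB hsq hτ hF hτ' hF'

end JCat

/-- In a J-category in which all objects are cofibrant models,
weakly equivalent morphisms have the same Whitehead sectional category. -/
theorem Wsecat_eq_of_weaklyEquivMor (J : JCat C)
    (hc : ∀ X : C, J.toPreJCat.CofModel X)
    {E B E' B' : C} (p : E ⟶ B) (p' : E' ⟶ B')
    (h : J.toPreJCat.WeaklyEquivMor (Arrow.mk p) (Arrow.mk p')) :
    J.toPreJCat.Wsecat p = J.toPreJCat.Wsecat p' := by
  suffices ∀ u v : Arrow C, J.WeaklyEquivMor u v → J.Wsecat u.hom = J.Wsecat v.hom from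
    this _ _ h
  intro u v huv
  induction huv with
  | rel u v huv =>
    obtain ⟨g, hl, hr⟩ := huv
    exact J.wsecat_eq_of_square hc hl hr (Arrow.w g)
  | refl => rfl
  | symm _ _ _ ih => exact ih.symm
  | trans _ _ _ _ _ ih ih' => exact ih.trans ih'
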